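/- Let H be a complex Hilbert space with dim H ≥ 3 and let A ∈ B_s(H) be nonscalar. The following are equivalent: (1) the spectrum of A has exactly two points; (2) every B ∈ B_s(H) with B^{cc} ⊊ A^{cc} is scalar. -/

import Mathlib

noncomputable section

variable {H : Type*} [NormedAddCommGroup H] [InnerProductSpace ℂ H] [CompleteSpace H]

/-- `M^c`: the set of self-adjoint operators commuting with every member of `M`. -/
def CSet (M : Set (selfAdjoint (H →L[ℂ] H))) : Set (selfAdjoint (H →L[ℂ] H)) :=
  {X | ∀ T ∈ M, (X : H →L[ℂ] H) * (T : H →L[ℂ] H) = (T : H →L[ℂ] H) * (X : H →L[ℂ] H)}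

/-- `M^{cc} = (M^c)^c`. -/
def CCSet (M : Set (selfAdjoint (H →L[ℂ] H))) : Set (selfAdjoint (H →L[ℂ] H)) :=
  CSet (CSet M)

/-! ### Auxiliary lemmas -/

section Aux

set_option linter.unusedSectionVars false

lemma rsmul' {M : Type*} [AddCommMonoid M] [Module ℝ M] [Module ℂ M] [IsScalarTower ℝ ℂ M]
    (α : ℝ) (x : M) : ((α:ℂ)) • x = α • x := by
  rw [show ((α:ℂ)) = algebraMap ℝ ℂ α from rfl, algebraMap_smul]

/-- A symmetric "rank-two" operator. -/
def rk2 (u v : H) : H →L[ℂ] H :=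
  ((innerSL ℂ u).smulRight v) + ((innerSL ℂ v).smulRight u)

lemma rk2_apply (u v z : H) : rk2 u v z = (inner ℂ u z : ℂ) • v + (inner ℂ v z : ℂ) • u := rfl

lemma rk2_selfAdjoint (u v : H) : IsSelfAdjoint (rk2 u v) := by
  rw [ContinuousLinearMap.isSelfAdjoint_iff_isSymmetric]
  intro x y
  simp only [ContinuousLinearMap.coe_coe, rk2_apply, inner_add_left, inner_add_right,
    inner_smul_left, inner_smul_right]
  rw [← inner_conj_symm u x, ← inner_conj_symm v x]
  ring_nf
  simp [mul_comm]

lemma commute_rk2 {P : H →L[ℂ] H} (hP : IsSelfAdjoint P) {u v : H} {α : ℝ}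
    (hu : P u = (α:ℂ) • u) (hv : P v = (α:ℂ) • v) : Commute P (rk2 u v) := by
  have hsym := ContinuousLinearMap.isSelfAdjoint_iff_isSymmetric.mp hP
  ext z
  simp only [ContinuousLinearMap.mul_apply, rk2_apply, map_add, map_smul, hu, hv]
  have h1 : (inner ℂ u (P z) : ℂ) = (inner ℂ (P u) z : ℂ) := (hsym u z).symm
  have h2 : (inner ℂ v (P z) : ℂ) = (inner ℂ (P v) z : ℂ) := (hsym v z).symm
  rw [h1, h2, hu, hv, inner_smul_left, inner_smul_left]
  simp only [← rsmul', smul_smul, Complex.conj_ofReal]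
  ring_nf

/-- If `X` commutes with `rk2 u u` then `u` is an eigenvector of `X`. -/
lemma eigen_of_commute_rk2 {X : H →L[ℂ] H} {u : H} (hu : u ≠ 0)
    (h : X * rk2 u u = rk2 u u * X) :
    X u = ((inner ℂ u (X u) : ℂ) / ((‖u‖:ℂ)^2)) • u := by
  have := DFunLike.congr_fun h u
  simp only [ContinuousLinearMap.mul_apply, rk2_apply, map_add, map_smul] at this
  have h2 : (inner ℂ u u : ℂ) • X u = (inner ℂ u (X u) : ℂ) • u := by
    have := this
    rw [← two_smul ℂ, ← two_smul ℂ] at this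
    · exact smul_right_injective _ (two_ne_zero) this
  have hnorm : (inner ℂ u u : ℂ) = (‖u‖:ℂ)^2 := by
    rw [inner_self_eq_norm_sq_to_K]; norm_num
  rw [hnorm] at h2
  have hn : ((‖u‖:ℂ)^2) ≠ 0 := by
    simp [pow_eq_zero_iff, norm_eq_zero, hu]
  have : X u = ((↑‖u‖^2 : ℂ))⁻¹ • ((inner ℂ u (X u) : ℂ) • u) := by
    rw [eq_inv_smul_iff₀ hn, h2]
  exact this.trans (by rw [smul_smul, ← div_eq_inv_mul])

/-- Uniformity of eigenvalues across commuting rk2. -/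
lemma eigen_unif {X : H →L[ℂ] H} {u v : H} (hu : u ≠ 0) {c d : ℂ}
    (hXu : X u = c • u) (hXv : X v = d • v) (hv : v ≠ 0)
    (h : X * rk2 u v = rk2 u v * X) : c = d := by
  have this := DFunLike.congr_fun h u
  simp only [ContinuousLinearMap.mul_apply, rk2_apply, map_add, map_smul, hXu, hXv,
    inner_smul_right, smul_add, smul_smul] at this
  rw [mul_comm (inner ℂ v u : ℂ) c] at this
  have h2 := add_right_cancel this
  have hiu : (inner ℂ u u : ℂ) ≠ 0 := by
    simp [inner_self_eq_zero, hu]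
  have h3 : (inner ℂ u u : ℂ) * d = c * (inner ℂ u u : ℂ) :=
    smul_left_injective ℂ hv h2
  rw [mul_comm c _] at h3
  exact (mul_left_cancel₀ hiu h3).symm

open Polynomial in
lemma poly_approx [Nontrivial H] (A : H →L[ℂ] H) (hA : IsSelfAdjoint A) (f : ℝ → ℝ)
    (hf : Continuous f) {ε : ℝ} (hε : 0 < ε) :
    ∃ p : ℝ[X], ‖cfc f A - aeval A p‖ ≤ ε := by
  set s : Set ℝ := Set.Icc (-‖A‖) ‖A‖ with hs
  have hspec : spectrum ℝ A ⊆ s := by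
    intro x hx
    have := spectrum.subset_closedBall_norm (𝕜 := ℝ) A hx
    simpa [Real.closedBall_eq_Icc, hs, abs_le] using this
  have hdense := polynomialFunctions_closure_eq_top (-‖A‖) ‖A‖
  have hmem : (ContinuousMap.restrict s ⟨f, hf⟩) ∈
      (polynomialFunctions s).topologicalClosure := by
    rw [hdense]; trivial
  rw [← SetLike.mem_coe, Subalgebra.topologicalClosure_coe] at hmem
  obtain ⟨g, hg, hdist⟩ := Metric.mem_closure_iff.mp hmem ε hε
  rw [SetLike.mem_coe, polynomialFunctions] at hg
  obtain ⟨p, -, hp⟩ := hg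
  refine ⟨p, ?_⟩
  have key : ∀ x ∈ spectrum ℝ A, ‖f x - p.eval x‖ ≤ ε := by
    intro x hx
    have hxs := hspec hx
    have := ContinuousMap.dist_apply_le_dist (f := ContinuousMap.restrict s ⟨f, hf⟩) (g := g) ⟨x, hxs⟩
    have h2 : g ⟨x, hxs⟩ = p.eval x := by
      rw [← hp]; rfl
    have : dist (f x) (p.eval x) ≤ dist (ContinuousMap.restrict s ⟨f, hf⟩) g := by
      simpa [h2] using this
    calc ‖f x - p.eval x‖ = dist (f x) (p.eval x) := by rw [dist_eq_norm]
    _ ≤ _ := this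
    _ ≤ ε := le_of_lt hdist
  calc ‖cfc f A - aeval A p‖ = ‖cfc (fun x => f x - p.eval x) A‖ := by
        rw [cfc_sub _ _ A hf.continuousOn (Polynomial.continuous p).continuousOn,
          cfc_polynomial p A hA]
    _ ≤ ε := norm_cfc_le hε.le key

open Polynomial in
lemma commute_aeval {A T : H →L[ℂ] H} (h : Commute T A) (p : ℝ[X]) :
    Commute T (aeval A p) := by
  induction p using Polynomial.induction_on with
  | C r => simpa [Polynomial.aeval_C, Algebra.algebraMap_eq_smul_one] using
      (Commute.one_right T).smul_right r
  | add p q hp hq => simpa [map_add] using hp.add_right hq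
  | monomial n r hp => simpa [map_mul, map_pow, Algebra.algebraMap_eq_smul_one] using
      ((Commute.one_right T).smul_right r |>.mul_right ((h.pow_right (n+1))))

lemma commute_cfc [Nontrivial H] {A T : H →L[ℂ] H} (hA : IsSelfAdjoint A)
    (h : Commute T A) (f : ℝ → ℝ) (hf : Continuous f) : Commute T (cfc f A) := by
  rw [Commute, SemiconjBy, ← sub_eq_zero, ← norm_le_zero_iff]
  have key : ∀ ε : ℝ, 0 < ε → ‖T * cfc f A - cfc f A * T‖ ≤ 0 + ε := by
    intro ε hε
    have hT : 0 < ‖T‖ + 1 := by positivity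
    obtain ⟨p, hp⟩ := poly_approx A hA f hf (ε := ε / (2 * (‖T‖ + 1))) (by positivity)
    have hc := (commute_aeval h p).eq
    have expand : T * cfc f A - cfc f A * T
        = T * (cfc f A - Polynomial.aeval A p) - (cfc f A - Polynomial.aeval A p) * T := by
      rw [mul_sub, sub_mul, hc]; abel
    rw [expand, zero_add]
    calc ‖T * (cfc f A - Polynomial.aeval A p) - (cfc f A - Polynomial.aeval A p) * T‖
        ≤ ‖T * (cfc f A - Polynomial.aeval A p)‖ + ‖(cfc f A - Polynomial.aeval A p) * T‖ :=
          norm_sub_le _ _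
      _ ≤ ‖T‖ * (ε / (2 * (‖T‖ + 1))) + (ε / (2 * (‖T‖ + 1))) * ‖T‖ := by
          refine add_le_add ?_ ?_
          · exact (norm_mul_le _ _).trans (mul_le_mul_of_nonneg_left hp (norm_nonneg T))
          · exact (norm_mul_le _ _).trans (mul_le_mul_of_nonneg_right hp (norm_nonneg T))
      _ ≤ ε := by
          rw [div_eq_mul_inv]
          have h1 : ‖T‖ ≤ ‖T‖ + 1 := by linarith
          have h0 : (0:ℝ) ≤ ‖T‖ := norm_nonneg T
          rw [show ‖T‖ * (ε * (2 * (‖T‖ + 1))⁻¹) + ε * (2 * (‖T‖ + 1))⁻¹ * ‖T‖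
              = ε * (‖T‖ / (‖T‖ + 1)) from by field_simp; ring]
          nlinarith [div_le_one_of_le₀ h1 (by linarith : (0:ℝ) ≤ ‖T‖ + 1)]
  linarith [key 1 one_pos, le_of_forall_pos_le_add key]

open Polynomial in
lemma eigen_aeval {A : H →L[ℂ] H} {x : H} {μ : ℂ} (hx : A x = μ • x) (p : ℝ[X]) :
    (aeval A p) x = (aeval μ p : ℂ) • x := by
  induction p using Polynomial.induction_on with
  | C r => simp [Polynomial.aeval_C, Algebra.algebraMap_eq_smul_one]
  | add p q hp hq => simp [map_add, hp, hq, add_smul, ContinuousLinearMap.add_apply]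
  | monomial n r hp =>
    have hpow : ∀ m : ℕ, (A ^ m) x = μ ^ m • x := by
      intro m
      induction m with
      | zero => simp
      | succ k ih =>
        rw [pow_succ, ContinuousLinearMap.mul_apply, hx, map_smul, ih, smul_smul, pow_succ,
          mul_comm]
    simp only [map_mul, map_pow, aeval_C, aeval_X, Algebra.algebraMap_eq_smul_one,
      ContinuousLinearMap.mul_apply, ContinuousLinearMap.smul_apply, ContinuousLinearMap.one_apply,
      hpow, smul_smul, smul_mul_assoc, one_mul, smul_assoc]

lemma cfc_sub_const (A : H →L[ℂ] H) (hA : IsSelfAdjoint A) (r : ℝ) :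
    cfc (fun x : ℝ => x - r) A = A - (r:ℂ) • 1 := by
  rw [cfc_sub _ _ A (by fun_prop) (by fun_prop),
    cfc_id' ℝ A, cfc_const r A, Algebra.algebraMap_eq_smul_one, rsmul']

lemma cfc_vanish (A : H →L[ℂ] H) (hA : IsSelfAdjoint A) (a' b' : ℝ)
    (hspec : spectrum ℝ A ⊆ {a', b'}) :
    (A - (a':ℂ) • 1) * (A - (b':ℂ) • 1) = 0 := by
  have h1 : cfc (fun x : ℝ => (x - a') * (x - b')) A
      = cfc (fun x : ℝ => x - a') A * cfc (fun x : ℝ => x - b') A :=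
    cfc_mul _ _ A (by fun_prop) (by fun_prop)
  rw [cfc_sub_const A hA, cfc_sub_const A hA] at h1
  rw [← h1]
  have h0 : cfc (fun x : ℝ => (x - a') * (x - b')) A = cfc (fun _ : ℝ => (0:ℝ)) A := by
    apply cfc_congr
    intro x hx
    rcases hspec hx with h | h <;> simp_all
  rw [h0]
  simp

lemma singleton_scalar (A : H →L[ℂ] H) (hA : IsSelfAdjoint A) (z : ℂ)
    (hspec : spectrum ℂ A = {z}) : A = z • 1 := by
  have hres := hA.spectrumRestricts
  have hz : z = (z.re : ℂ) := by
    have hzz : z ∈ spectrum ℂ A := by rw [hspec]; rfl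
    have := hres.rightInvOn hzz
    simpa using this.symm
  have hsub : spectrum ℝ A ⊆ {z.re, z.re} := by
    rw [← hres.image, hspec]
    rintro x ⟨y, hy, rfl⟩
    rw [Set.mem_singleton_iff] at hy
    subst hy
    simp
  have := cfc_vanish A hA z.re z.re hsub
  have hsq : (A - (z.re:ℂ) • 1) = 0 := by
    have h2 : IsSelfAdjoint (A - (z.re:ℂ) • 1) := by
      apply hA.sub
      rw [rsmul']
      exact IsSelfAdjoint.smul (star_trivial z.re) (IsSelfAdjoint.one (H →L[ℂ] H))
    rw [← norm_eq_zero]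
    have hmul : ‖(A - (z.re:ℂ) • 1)‖ * ‖(A - (z.re:ℂ) • 1)‖
        = ‖(A - (z.re:ℂ) • 1) * (A - (z.re:ℂ) • 1)‖ := by
      conv_rhs => rw [show (A - (z.re:ℂ) • 1) * (A - (z.re:ℂ) • 1)
        = star (A - (z.re:ℂ) • 1) * (A - (z.re:ℂ) • 1) from by rw [h2.star_eq]]
      rw [CStarRing.norm_star_mul_self]
    rw [this, norm_zero] at hmul
    exact (mul_self_eq_zero).mp hmul
  rw [sub_eq_zero] at hsq
  rw [hsq, ← hz]

def bump (t₀ δ t : ℝ) : ℝ := max 0 (1 - |t - t₀|/δ)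
def plateau (t₀ δ t : ℝ) : ℝ := min 1 (max 0 (2 - |t - t₀|/δ))

lemma bump_cont (t₀ δ : ℝ) : Continuous (bump t₀ δ) := by unfold bump; fun_prop
lemma plateau_cont (t₀ δ : ℝ) : Continuous (plateau t₀ δ) := by unfold plateau; fun_prop

lemma bump_self (t₀ : ℝ) {δ : ℝ} (hδ : 0 < δ) : bump t₀ δ t₀ = 1 := by
  simp [bump]

lemma bump_supp {t₀ δ t : ℝ} (hδ : 0 < δ) (h : bump t₀ δ t ≠ 0) : |t - t₀| < δ := by
  by_contra hc
  push_neg at hc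
  apply h
  have : (1:ℝ) - |t - t₀|/δ ≤ 0 := by
    have : (1:ℝ) ≤ |t - t₀|/δ := (one_le_div hδ).mpr hc
    linarith
  simp [bump, max_eq_left this]

lemma plateau_one {t₀ δ t : ℝ} (hδ : 0 < δ) (h : |t - t₀| ≤ δ) : plateau t₀ δ t = 1 := by
  have h1 : |t - t₀|/δ ≤ 1 := (div_le_one hδ).mpr h
  have h2 : (1:ℝ) ≤ 2 - |t - t₀|/δ := by linarith
  simp only [plateau]
  rw [min_eq_left (le_max_of_le_right h2)]

lemma plateau_supp {t₀ δ t : ℝ} (hδ : 0 < δ) (h : plateau t₀ δ t ≠ 0) : |t - t₀| < 2*δ := by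
  by_contra hc
  push_neg at hc
  apply h
  have : (2:ℝ) ≤ |t - t₀|/δ := by
    rw [le_div_iff₀ hδ]; linarith
  have h0 : 2 - |t - t₀|/δ ≤ 0 := by linarith
  simp [plateau, max_eq_left h0]

lemma mul_eq_zero_of_supports {F G : ℝ → ℝ} {s₁ s₂ r₁ r₂ : ℝ}
    (hF : ∀ t, F t ≠ 0 → |t - s₁| < r₁) (hG : ∀ t, G t ≠ 0 → |t - s₂| < r₂)
    (hd : r₁ + r₂ ≤ |s₁ - s₂|) : ∀ t, F t * G t = 0 := by
  intro t
  rcases eq_or_ne (F t) 0 with h | h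
  · rw [h, zero_mul]
  rcases eq_or_ne (G t) 0 with h' | h'
  · rw [h', mul_zero]
  exfalso
  have h1 := hF t h
  have h2 := hG t h'
  have := abs_sub_le s₁ t s₂
  rw [abs_sub_comm s₁ t] at this
  linarith

lemma proj_sq (A : H →L[ℂ] H) (a' b' : ℝ)
    (hvan : (A - (a':ℂ) • 1) * (A - (b':ℂ) • 1) = 0) :
    (A - (b':ℂ) • 1) * (A - (b':ℂ) • 1) = ((a':ℂ) - (b':ℂ)) • (A - (b':ℂ) • 1) := by
  have h := hvan
  simp only [mul_sub, sub_mul, mul_smul_comm, smul_mul_assoc, mul_one, one_mul, smul_smul,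
    smul_sub, sub_smul] at h ⊢
  linear_combination (norm := module) h

lemma mem_CSet_singleton {Y T : selfAdjoint (H →L[ℂ] H)} :
    T ∈ CSet {Y} ↔ (T : H →L[ℂ] H) * (Y : H →L[ℂ] H) = (Y : H →L[ℂ] H) * (T : H →L[ℂ] H) := by
  constructor
  · intro h
    exact h Y rfl
  · intro h T' hT'
    rw [Set.mem_singleton_iff] at hT'
    subst hT'
    exact h

lemma self_mem_CCSet (B : selfAdjoint (H →L[ℂ] H)) : B ∈ CCSet {B} := by
  intro T hT
  exact (hT B rfl).symm

end Aux

set_option maxHeartbeats 1000000 in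
theorem stmt7
    (hdim : 3 ≤ Module.rank ℂ H)
    (A : selfAdjoint (H →L[ℂ] H))
    (hA : ¬ ∃ r : ℝ, (A : H →L[ℂ] H) = (r : ℂ) • 1) :
    (∃ a b : ℂ, a ≠ b ∧ spectrum ℂ (A : H →L[ℂ] H) = {a, b}) ↔
      (∀ B : selfAdjoint (H →L[ℂ] H), CCSet {B} ⊂ CCSet {A} →
        ∃ r : ℝ, (B : H →L[ℂ] H) = (r : ℂ) • 1) := by
  have hnt : Nontrivial H := rank_pos_iff_nontrivial.mp (lt_of_lt_of_le (by norm_num) hdim)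
  have hntL : Nontrivial (H →L[ℂ] H) := by
    refine nontrivial_of_ne 1 0 fun hcon => ?_
    obtain ⟨x, y, hxy⟩ := hnt
    have := DFunLike.congr_fun hcon (x - y)
    simp only [ContinuousLinearMap.one_apply, ContinuousLinearMap.zero_apply, sub_eq_zero] at this
    exact hxy this
  set S : H →L[ℂ] H := (A : H →L[ℂ] H) with hS
  have hAsa : IsSelfAdjoint S := A.2
  have hres := hAsa.spectrumRestricts
  constructor
  · -- two-point spectrum implies every strictly smaller bicommutant is scalar
    rintro ⟨a, b, hab, hspec⟩ B hBA
    have ha_mem : a ∈ spectrum ℂ S := by rw [hspec]; exact Set.mem_insert _ _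
    have hb_mem : b ∈ spectrum ℂ S := by rw [hspec]; exact Set.mem_insert_of_mem _ rfl
    have haa : ((a.re : ℝ) : ℂ) = a := by simpa using hres.rightInvOn ha_mem
    have hbb : ((b.re : ℝ) : ℂ) = b := by simpa using hres.rightInvOn hb_mem
    set a' := a.re
    set b' := b.re
    have hab' : a' ≠ b' := fun h => hab (by rw [← haa, ← hbb, h])
    have hspecR : spectrum ℝ S ⊆ {a', b'} := by
      rw [← hres.image, hspec]
      rintro x ⟨y, hy, rfl⟩
      rcases hy with rfl | rfl <;> simp [a', b']
    have hvan := cfc_vanish S hAsa a' b' hspecR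
    set r : ℝ := (a' - b')⁻¹ with hr
    have hrne : r ≠ 0 := inv_ne_zero (sub_ne_zero.mpr hab')
    set c : ℂ := (r : ℂ) with hcdef
    have hcne : c ≠ 0 := by rw [hcdef]; exact_mod_cast hrne
    have hcc : c * ((a' : ℂ) - b') = 1 := by
      rw [hcdef, hr]
      push_cast
      rw [← one_div, div_mul_eq_mul_div, one_mul, div_self]
      exact sub_ne_zero.mpr fun h => hab' (by exact_mod_cast h)
    set P : H →L[ℂ] H := c • (S - (b':ℂ) • 1) with hP
    have hPsa : IsSelfAdjoint P := by
      rw [hP, hcdef, rsmul']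
      refine IsSelfAdjoint.smul (star_trivial r) ?_
      apply hAsa.sub
      rw [rsmul']
      exact IsSelfAdjoint.smul (star_trivial b') (IsSelfAdjoint.one (H →L[ℂ] H))
    have hPP : P * P = P := by
      rw [hP]
      rw [smul_mul_assoc, mul_smul_comm, smul_smul, proj_sq S a' b' hvan, smul_smul]
      rw [show c * c * ((a':ℂ) - (b':ℂ)) = c * (c * ((a':ℂ) - b')) from by ring, hcc, mul_one]
    have hSP : S - (b':ℂ) • 1 = c⁻¹ • P := by
      rw [hP, inv_smul_smul₀ hcne]
    have comm_iff : ∀ T : H →L[ℂ] H, Commute T S ↔ Commute T P := by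
      intro T
      constructor
      · intro h
        exact ((h.sub_right ((Commute.one_right T).smul_right _)).smul_right c)
      · intro h
        have h2 : Commute T (S - (b':ℂ) • 1) := by
          rw [hSP]
          exact h.smul_right _
        have h3 := h2.add_right ((Commute.one_right T).smul_right ((b':ℂ)))
        simpa using h3
    have hP0 : P ≠ 0 := by
      intro h
      apply hA
      refine ⟨b', ?_⟩
      have h2 : S - (b':ℂ) • 1 = 0 := by
        rw [hSP, h, smul_zero]
      rw [← sub_eq_zero]
      exact h2
    have hP1 : P ≠ 1 := by
      intro h
      apply hA
      refine ⟨a', ?_⟩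
      have hcinv : c⁻¹ = (a':ℂ) - b' := inv_eq_of_mul_eq_one_right hcc
      have h2 : S - (b':ℂ) • 1 = ((a':ℂ) - b') • 1 := by rw [hSP, h, hcinv]
      rw [sub_eq_iff_eq_add] at h2
      rw [h2, ← add_smul, sub_add_cancel]
    -- eigenvector machinery
    have hBmem : B ∈ CCSet {A} := hBA.subset (self_mem_CCSet B)
    set X : H →L[ℂ] H := (B : H →L[ℂ] H) with hX
    have hXsa : IsSelfAdjoint X := B.2
    have hXrk : ∀ (u v : H) (α : ℝ), P u = (α:ℂ) • u → P v = (α:ℂ) • v →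
        X * rk2 u v = rk2 u v * X := by
      intro u v α hu hv
      have h1 : Commute P (rk2 u v) := commute_rk2 hPsa hu hv
      have h2 : Commute (rk2 u v) S := (comm_iff (rk2 u v)).mpr h1.symm
      have hmemC : (⟨rk2 u v, rk2_selfAdjoint u v⟩ : selfAdjoint (H →L[ℂ] H)) ∈ CSet {A} := by
        rw [mem_CSet_singleton]
        exact h2
      exact hBmem _ hmemC
    have heig : ∀ (u : H) (α : ℝ), u ≠ 0 → P u = (α:ℂ) • u →
        X u = ((inner ℂ u (X u) : ℂ) / ((‖u‖:ℂ)^2)) • u := by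
      intro u α hu hPu
      exact eigen_of_commute_rk2 hu (hXrk u u α hPu hPu)
    obtain ⟨z₀, hz₀⟩ : ∃ z, P z ≠ 0 := by
      by_contra hcon
      push_neg at hcon
      exact hP0 (ContinuousLinearMap.ext fun z => by rw [hcon z]; rfl)
    obtain ⟨z₁, hz₁⟩ : ∃ z, P z ≠ z := by
      by_contra hcon
      push_neg at hcon
      exact hP1 (ContinuousLinearMap.ext fun z => by rw [hcon z]; rfl)
    set u₀ : H := P z₀ with hu₀def
    have hu₀ne : u₀ ≠ 0 := hz₀
    have hPu₀ : P u₀ = ((1:ℝ):ℂ) • u₀ := by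
      have := DFunLike.congr_fun hPP z₀
      simp only [ContinuousLinearMap.mul_apply] at this
      rw [hu₀def]
      simpa using this
    set v₀ : H := z₁ - P z₁ with hv₀def
    have hv₀ne : v₀ ≠ 0 := sub_ne_zero.mpr (Ne.symm hz₁)
    have hPv₀ : P v₀ = ((0:ℝ):ℂ) • v₀ := by
      have := DFunLike.congr_fun hPP z₁
      simp only [ContinuousLinearMap.mul_apply] at this
      rw [hv₀def]
      simp [map_sub, this]
    set α : ℂ := (inner ℂ u₀ (X u₀) : ℂ) / ((‖u₀‖:ℂ)^2) with hα
    set β : ℂ := (inner ℂ v₀ (X v₀) : ℂ) / ((‖v₀‖:ℂ)^2) with hβ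
    have hXu₀ : X u₀ = α • u₀ := heig u₀ 1 hu₀ne hPu₀
    have hXv₀ : X v₀ = β • v₀ := heig v₀ 0 hv₀ne hPv₀
    have hunif1 : ∀ u : H, P u = u → X u = α • u := by
      intro u hu
      rcases eq_or_ne u 0 with rfl | hune
      · simp
      have hPu : P u = ((1:ℝ):ℂ) • u := by simpa using hu
      have hXu : X u = ((inner ℂ u (X u) : ℂ) / ((‖u‖:ℂ)^2)) • u := heig u 1 hune hPu
      have := eigen_unif hu₀ne hXu₀ hXu hune (hXrk u₀ u 1 hPu₀ hPu)
      rw [hXu, ← this]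
    have hunif0 : ∀ v : H, P v = 0 → X v = β • v := by
      intro v hv
      rcases eq_or_ne v 0 with rfl | hvne
      · simp
      have hPv : P v = ((0:ℝ):ℂ) • v := by simpa using hv
      have hXv : X v = ((inner ℂ v (X v) : ℂ) / ((‖v‖:ℂ)^2)) • v := heig v 0 hvne hPv
      have := eigen_unif hv₀ne hXv₀ hXv hvne (hXrk v₀ v 0 hPv₀ hPv)
      rw [hXv, ← this]
    have hdecomp : ∀ h : H, X h = α • P h + β • (h - P h) := by
      intro h
      have k1 : P (P h) = P h := by
        have := DFunLike.congr_fun hPP h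
        simpa using this
      have k2 : P (h - P h) = 0 := by
        rw [map_sub, k1, sub_self]
      have : X h = X (P h) + X (h - P h) := by
        rw [← map_add, add_sub_cancel]
      rw [this, hunif1 _ k1, hunif0 _ k2]
    -- realness of α and β
    have hXsym := ContinuousLinearMap.isSelfAdjoint_iff_isSymmetric.mp hXsa
    have hreal : ∀ (u : H) (γ : ℂ), u ≠ 0 → X u = γ • u → (starRingEnd ℂ) γ = γ := by
      intro u γ hu hXu
      have h1 : (inner ℂ u (X u) : ℂ) = γ * (inner ℂ u u : ℂ) := by
        rw [hXu, inner_smul_right]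
      have h2 : (inner ℂ (X u) u : ℂ) = (starRingEnd ℂ) γ * (inner ℂ u u : ℂ) := by
        rw [hXu, inner_smul_left]
      have h3 := hXsym u u
      simp only [ContinuousLinearMap.coe_coe] at h3
      rw [h2, h1] at h3
      have hiu : (inner ℂ u u : ℂ) ≠ 0 := by simp [inner_self_eq_zero, hu]
      exact mul_right_cancel₀ hiu h3
    have hαre : ((α.re : ℝ) : ℂ) = α :=
      Complex.conj_eq_iff_re.mp (hreal u₀ α hu₀ne hXu₀) ▸ rfl
    have hβre : ((β.re : ℝ) : ℂ) = β :=
      Complex.conj_eq_iff_re.mp (hreal v₀ β hv₀ne hXv₀) ▸ rfl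
    by_cases hαβ : α = β
    · refine ⟨β.re, ?_⟩
      show X = ((β.re : ℝ) : ℂ) • 1
      ext h
      have := hdecomp h
      rw [hαβ] at this
      rw [this, hβre]
      simp only [ContinuousLinearMap.smul_apply, ContinuousLinearMap.one_apply]
      rw [smul_sub]
      abel
    · exfalso
      -- then CSet {A} = CSet {B}, contradicting strictness
      have hXop : X = (α - β) • P + β • 1 := by
        ext h
        rw [hdecomp h]
        simp only [ContinuousLinearMap.add_apply, ContinuousLinearMap.smul_apply,
          ContinuousLinearMap.one_apply]
        rw [sub_smul, smul_sub]
        abel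
      have hPX : P = (α - β)⁻¹ • (X - β • 1) := by
        rw [hXop]
        rw [add_sub_cancel_right, inv_smul_smul₀ (sub_ne_zero.mpr hαβ)]
      have hcommX : ∀ T : H →L[ℂ] H, Commute T S ↔ Commute T X := by
        intro T
        rw [comm_iff]
        constructor
        · intro h
          rw [hXop]
          exact (h.smul_right _).add_right ((Commute.one_right T).smul_right _)
        · intro h
          rw [hPX]
          exact ((h.sub_right ((Commute.one_right T).smul_right _)).smul_right _)
      have hCSet : CSet {A} = CSet {B} := by
        ext T
        rw [mem_CSet_singleton, mem_CSet_singleton]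
        exact ⟨fun h => (hcommX (T:H →L[ℂ] H)).mp h, fun h => (hcommX (T:H →L[ℂ] H)).mpr h⟩
      have : CCSet {B} = CCSet {A} := by
        unfold CCSet
        rw [hCSet]
      exact (Set.ssubset_iff_subset_ne.mp hBA).2 this
  · -- if every strictly smaller bicommutant is scalar, spectrum has two points
    intro hall
    by_contra hno
    obtain ⟨a, ha_mem⟩ := spectrum.nonempty S
    have h1 : ¬ spectrum ℂ S ⊆ {a} := by
      intro h
      have heq : spectrum ℂ S = {a} := Set.Subset.antisymm h (Set.singleton_subset_iff.mpr ha_mem)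
      have := singleton_scalar S hAsa a heq
      have haa : ((a.re : ℝ) : ℂ) = a := by simpa using hres.rightInvOn ha_mem
      exact hA ⟨a.re, by rw [this, haa]⟩
    obtain ⟨b, hb_mem, hba⟩ : ∃ b ∈ spectrum ℂ S, b ≠ a := by
      by_contra hcon
      push_neg at hcon
      exact h1 fun x hx => hcon x hx
    have h2 : ¬ spectrum ℂ S ⊆ {a, b} := by
      intro h
      apply hno
      refine ⟨a, b, hba.symm, ?_⟩
      refine Set.Subset.antisymm h ?_
      rintro x (rfl | rfl)
      · exact ha_mem
      · exact hb_mem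
    obtain ⟨cc, hc_mem, hcab⟩ : ∃ cc ∈ spectrum ℂ S, cc ∉ ({a, b} : Set ℂ) := by
      by_contra hcon
      push_neg at hcon
      exact h2 fun x hx => hcon x hx
    have haa : ((a.re : ℝ) : ℂ) = a := by simpa using hres.rightInvOn ha_mem
    have hbb : ((b.re : ℝ) : ℂ) = b := by simpa using hres.rightInvOn hb_mem
    have hcc : ((cc.re : ℝ) : ℂ) = cc := by simpa using hres.rightInvOn hc_mem
    set a' := a.re
    set b' := b.re
    set c' := cc.re
    have haR : a' ∈ spectrum ℝ S := by
      have := hres.apply_mem ha_mem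
      simpa using this
    have hbR : b' ∈ spectrum ℝ S := by
      have := hres.apply_mem hb_mem
      simpa using this
    have hcR : c' ∈ spectrum ℝ S := by
      have := hres.apply_mem hc_mem
      simpa using this
    have hab' : a' ≠ b' := fun h => hba (by rw [← haa, ← hbb, h])
    have hca' : c' ≠ a' := fun h => hcab (Set.mem_insert_iff.mpr (Or.inl (by
      rw [← hcc, ← haa, h])))
    have hcb' : c' ≠ b' := fun h => hcab (Set.mem_insert_iff.mpr (Or.inr (by
      rw [show cc = ((c':ℝ):ℂ) from hcc.symm, h, hbb]; exact rfl)))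
    set m : ℝ := min |a' - b'| (min |a' - c'| |b' - c'|) with hm
    have hm0 : 0 < m := by
      apply lt_min
      · exact abs_sub_pos.mpr hab'
      · exact lt_min (abs_sub_pos.mpr (Ne.symm hca')) (abs_sub_pos.mpr (Ne.symm hcb'))
    set δ : ℝ := m / 5 with hδdef
    have hδ : 0 < δ := by positivity
    have hmab : 5 * δ ≤ |a' - b'| := by
      rw [hδdef]
      have := min_le_left |a' - b'| (min |a' - c'| |b' - c'|)
      linarith
    have hmac : 5 * δ ≤ |a' - c'| := by
      rw [hδdef]
      have h1 := min_le_right |a' - b'| (min |a' - c'| |b' - c'|)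
      have h2 := min_le_left |a' - c'| |b' - c'|
      linarith
    have hmbc : 5 * δ ≤ |b' - c'| := by
      rw [hδdef]
      have h1 := min_le_right |a' - b'| (min |a' - c'| |b' - c'|)
      have h2 := min_le_right |a' - c'| |b' - c'|
      linarith
    set f : ℝ → ℝ := bump c' δ with hf
    set g : ℝ → ℝ := bump a' δ with hg
    set k : ℝ → ℝ := bump b' δ with hk
    set g₁ : ℝ → ℝ := plateau a' δ with hg₁
    set k₁ : ℝ → ℝ := plateau b' δ with hk₁
    have hfs : ∀ t, f t ≠ 0 → |t - c'| < δ := fun t => bump_supp hδ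
    have hgs : ∀ t, g t ≠ 0 → |t - a'| < δ := fun t => bump_supp hδ
    have hks : ∀ t, k t ≠ 0 → |t - b'| < δ := fun t => bump_supp hδ
    have hg₁s : ∀ t, g₁ t ≠ 0 → |t - a'| < 2*δ := fun t => plateau_supp hδ
    have hk₁s : ∀ t, k₁ t ≠ 0 → |t - b'| < 2*δ := fun t => plateau_supp hδ
    have hfg : ∀ t, f t * g t = 0 :=
      mul_eq_zero_of_supports hfs hgs (by rw [abs_sub_comm]; linarith)
    have hfk : ∀ t, f t * k t = 0 :=
      mul_eq_zero_of_supports hfs hks (by rw [abs_sub_comm]; linarith)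
    have hgk : ∀ t, g t * k t = 0 :=
      mul_eq_zero_of_supports hgs hks (by linarith)
    have hg₁k : ∀ t, g₁ t * k t = 0 :=
      mul_eq_zero_of_supports hg₁s hks (by linarith)
    have hk₁g : ∀ t, k₁ t * g t = 0 :=
      mul_eq_zero_of_supports hk₁s hgs (by rw [abs_sub_comm]; linarith)
    have hg₁g : ∀ t, g₁ t * g t = g t := by
      intro t
      rcases eq_or_ne (g t) 0 with h | h
      · rw [h, mul_zero]
      · rw [show g₁ t = 1 from plateau_one hδ (hgs t h).le, one_mul]
    have hk₁k : ∀ t, k₁ t * k t = k t := by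
      intro t
      rcases eq_or_ne (k t) 0 with h | h
      · rw [h, mul_zero]
      · rw [show k₁ t = 1 from plateau_one hδ (hks t h).le, one_mul]
    -- operators
    set Fop : H →L[ℂ] H := cfc f S with hFop
    set Gop : H →L[ℂ] H := cfc g S with hGop
    set Kop : H →L[ℂ] H := cfc k S with hKop
    set G1op : H →L[ℂ] H := cfc g₁ S with hG1op
    set K1op : H →L[ℂ] H := cfc k₁ S with hK1op
    have hmulop : ∀ (φ ψ : ℝ → ℝ), Continuous φ → Continuous ψ →
        cfc φ S * cfc ψ S = cfc (fun t => φ t * ψ t) S := by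
      intro φ ψ hφ hψ
      exact (cfc_mul _ _ S hφ.continuousOn hψ.continuousOn).symm
    have hzeroop : ∀ (φ ψ : ℝ → ℝ), Continuous φ → Continuous ψ → (∀ t, φ t * ψ t = 0) →
        cfc φ S * cfc ψ S = 0 := by
      intro φ ψ hφ hψ hzero
      rw [hmulop φ ψ hφ hψ, show (fun t => φ t * ψ t) = (fun _ : ℝ => (0:ℝ)) from funext hzero]
      simp
    have hFG : Fop * Gop = 0 := hzeroop f g (bump_cont _ _) (bump_cont _ _) hfg
    have hFK : Fop * Kop = 0 := hzeroop f k (bump_cont _ _) (bump_cont _ _) hfk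
    have hGK : Gop * Kop = 0 := hzeroop g k (bump_cont _ _) (bump_cont _ _) hgk
    have hG1K : G1op * Kop = 0 := hzeroop g₁ k (plateau_cont _ _) (bump_cont _ _) hg₁k
    have hK1G : K1op * Gop = 0 := hzeroop k₁ g (plateau_cont _ _) (bump_cont _ _) hk₁g
    have hG1G : G1op * Gop = Gop := by
      rw [hmulop g₁ g (plateau_cont _ _) (bump_cont _ _),
        show (fun t => g₁ t * g t) = g from funext hg₁g]
    have hK1K : K1op * Kop = Kop := by
      rw [hmulop k₁ k (plateau_cont _ _) (bump_cont _ _),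
        show (fun t => k₁ t * k t) = k from funext hk₁k]
    have hFsa : IsSelfAdjoint Fop := cfc_predicate f S
    have hGsa : IsSelfAdjoint Gop := cfc_predicate g S
    have hKsa : IsSelfAdjoint Kop := cfc_predicate k S
    have hne_of_one : ∀ (φ : ℝ → ℝ), Continuous φ → (∃ t ∈ spectrum ℝ S, φ t = 1) →
        cfc φ S ≠ 0 := by
      intro φ hφ ⟨t, ht, hφt⟩ hcon
      have : (1:ℝ) ∈ spectrum ℝ (cfc φ S) := by
        rw [cfc_map_spectrum φ S hAsa hφ.continuousOn]
        exact ⟨t, ht, hφt⟩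
      rw [hcon, spectrum.zero_eq] at this
      simp at this
    have hFne : Fop ≠ 0 := hne_of_one f (bump_cont _ _) ⟨c', hcR, bump_self c' hδ⟩
    have hGne : Gop ≠ 0 := hne_of_one g (bump_cont _ _) ⟨a', haR, bump_self a' hδ⟩
    have hKne : Kop ≠ 0 := hne_of_one k (bump_cont _ _) ⟨b', hbR, bump_self b' hδ⟩
    obtain ⟨u, hu⟩ : ∃ u, Gop u ≠ 0 := by
      by_contra hcon
      push_neg at hcon
      exact hGne (ContinuousLinearMap.ext fun z => by rw [hcon z]; rfl)
    obtain ⟨v, hv⟩ : ∃ v, Kop v ≠ 0 := by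
      by_contra hcon
      push_neg at hcon
      exact hKne (ContinuousLinearMap.ext fun z => by rw [hcon z]; rfl)
    set x : H := Gop u with hx
    set y : H := Kop v with hy
    have hFx : Fop x = 0 := by
      rw [hx, ← ContinuousLinearMap.mul_apply, hFG]; rfl
    have hFy : Fop y = 0 := by
      rw [hy, ← ContinuousLinearMap.mul_apply, hFK]; rfl
    have hGsym := ContinuousLinearMap.isSelfAdjoint_iff_isSymmetric.mp hGsa
    have hxy : (inner ℂ x y : ℂ) = 0 := by
      rw [hx, hy]
      have := hGsym u (Kop v)
      simp only [ContinuousLinearMap.coe_coe] at this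
      rw [this, ← ContinuousLinearMap.mul_apply, hGK]
      simp
    set w : H := x + y with hw
    have hwne : w ≠ 0 := by
      intro hcon
      have hxy0 : x + y = 0 := hcon
      have hyx : y = -x := by
        rw [eq_neg_iff_add_eq_zero, add_comm]
        exact hxy0
      rw [hyx, inner_neg_right, neg_eq_zero, inner_self_eq_zero] at hxy
      exact hu hxy
    have hFw : Fop w = 0 := by
      rw [hw, map_add, hFx, hFy, add_zero]
    set Bsa : selfAdjoint (H →L[ℂ] H) := ⟨Fop, hFsa⟩ with hBsa
    set Tw : H →L[ℂ] H := rk2 w w with hTw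
    have hFsym := ContinuousLinearMap.isSelfAdjoint_iff_isSymmetric.mp hFsa
    have hTB : Tw * Fop = Fop * Tw := by
      ext z
      simp only [ContinuousLinearMap.mul_apply, hTw, rk2_apply, map_add, map_smul]
      have h1 : (inner ℂ w (Fop z) : ℂ) = (inner ℂ (Fop w) z : ℂ) := (hFsym w z).symm
      rw [h1, hFw]
      simp
    have hTmem : (⟨Tw, by rw [hTw]; exact rk2_selfAdjoint w w⟩ : selfAdjoint (H →L[ℂ] H))
        ∈ CSet {Bsa} := by
      rw [mem_CSet_singleton]
      exact hTB
    have hsub : CCSet {Bsa} ⊆ CCSet {A} := by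
      intro Z hZ T hT
      apply hZ
      rw [mem_CSet_singleton] at hT ⊢
      exact (commute_cfc hAsa hT f (bump_cont _ _)).eq
    have hAinA : A ∈ CCSet {A} := self_mem_CCSet A
    have hAnotinB : A ∉ CCSet {Bsa} := by
      intro hmem
      have hcomm := hmem _ hTmem
      -- hcomm : S * Tw = Tw * S
      have hSw : S w = ((inner ℂ w (S w) : ℂ) / ((‖w‖:ℂ)^2)) • w := by
        exact eigen_of_commute_rk2 hwne hcomm
      set μ : ℂ := (inner ℂ w (S w) : ℂ) / ((‖w‖:ℂ)^2) with hμ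
      have hG1w : G1op w = x := by
        rw [hw, map_add]
        have e1 : G1op x = x := by
          rw [hx, ← ContinuousLinearMap.mul_apply, hG1G]
        have e2 : G1op y = 0 := by
          rw [hy, ← ContinuousLinearMap.mul_apply, hG1K]; rfl
        rw [e1, e2, add_zero]
      have hK1w : K1op w = y := by
        rw [hw, map_add]
        have e1 : K1op x = 0 := by
          rw [hx, ← ContinuousLinearMap.mul_apply, hK1G]; rfl
        have e2 : K1op y = y := by
          rw [hy, ← ContinuousLinearMap.mul_apply, hK1K]
        rw [e1, e2, zero_add]
      have hcommG1 : Commute S G1op := commute_cfc hAsa (Commute.refl S) g₁ (plateau_cont _ _)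
      have hcommK1 : Commute S K1op := commute_cfc hAsa (Commute.refl S) k₁ (plateau_cont _ _)
      have hSx : S x = μ • x := by
        rw [← hG1w]
        have := DFunLike.congr_fun hcommG1.eq w
        simp only [ContinuousLinearMap.mul_apply] at this
        rw [this, hSw, map_smul]
      have hSy : S y = μ • y := by
        rw [← hK1w]
        have := DFunLike.congr_fun hcommK1.eq w
        simp only [ContinuousLinearMap.mul_apply] at this
        rw [this, hSw, map_smul]
      obtain ⟨p, hp⟩ := poly_approx S hAsa g₁ (plateau_cont _ _) (ε := 1/4) (by norm_num)
      set cx : ℂ := (Polynomial.aeval μ p : ℂ) with hcx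
      have key : ∀ z : H, S z = μ • z →
          ‖G1op z - cx • z‖ ≤ (1/4) * ‖z‖ := by
        intro z hz
        have e1 : (Polynomial.aeval S p) z = cx • z := eigen_aeval hz p
        have e2 : G1op z - cx • z = (G1op - Polynomial.aeval S p) z := by
          rw [ContinuousLinearMap.sub_apply, e1]
        rw [e2]
        calc ‖(G1op - Polynomial.aeval S p) z‖
            ≤ ‖G1op - Polynomial.aeval S p‖ * ‖z‖ := ContinuousLinearMap.le_opNorm _ _
          _ ≤ (1/4) * ‖z‖ := mul_le_mul_of_nonneg_right (by rw [hG1op]; exact hp) (norm_nonneg z)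
      have hxne : x ≠ 0 := hu
      have hyne : y ≠ 0 := hv
      have hb1 : ‖1 - cx‖ ≤ 1/4 := by
        have := key x hSx
        have e1 : G1op x = x := by
          rw [hx, ← ContinuousLinearMap.mul_apply, hG1G]
        rw [e1, show x - cx • x = (1 - cx) • x from by rw [sub_smul, one_smul]] at this
        rw [norm_smul] at this
        have hx0 : 0 < ‖x‖ := norm_pos_iff.mpr hxne
        exact le_of_mul_le_mul_right this hx0
      have hb2 : ‖cx‖ ≤ 1/4 := by
        have := key y hSy
        have e2 : G1op y = 0 := by
          rw [hy, ← ContinuousLinearMap.mul_apply, hG1K]; rfl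
        rw [e2, zero_sub, norm_neg, norm_smul] at this
        have hy0 : 0 < ‖y‖ := norm_pos_iff.mpr hyne
        exact le_of_mul_le_mul_right this hy0
      have : (1:ℝ) ≤ 1/2 := by
        calc (1:ℝ) = ‖(1:ℂ)‖ := by simp
          _ = ‖(1 - cx) + cx‖ := by ring_nf
          _ ≤ ‖1 - cx‖ + ‖cx‖ := norm_add_le _ _
          _ ≤ 1/4 + 1/4 := add_le_add hb1 hb2
          _ = 1/2 := by norm_num
      linarith
    have hss : CCSet {Bsa} ⊂ CCSet {A} := by
      rw [Set.ssubset_iff_subset_ne]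
      refine ⟨hsub, fun heq => hAnotinB ?_⟩
      rw [heq]
      exact hAinA
    obtain ⟨r, hr⟩ := hall Bsa hss
    have : Fop = (r : ℂ) • 1 := hr
    have hr0 : (r : ℂ) = 0 := by
      have := DFunLike.congr_fun this x
      simp only [ContinuousLinearMap.smul_apply, ContinuousLinearMap.one_apply] at this
      rw [hFx] at this
      rcases smul_eq_zero.mp this.symm with h | h
      · exact h
      · exact absurd h hu
    apply hFne
    rw [this, hr0, zero_smul]
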